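/- arXiv:2104.12576 — 2 statements merged into one kernel-verified Lean document; each statement's English description precedes it below -/
import Mathlib

section
/- Let $A \in \mathbb{R}^{n \times m_1}$ and $B \in \mathbb{R}^{n \times m_2}$ be matrices, and suppose there exist constants $0 < c_* \leq c^*$ and $\omega \geq 0$ such that: (i) $n c_* \|u\|_2^2 \leq \|A u\|_2^2 \leq n c^* \|u\|_2^2$ for all $u \in \mathbb{R}^{m_1}$, (ii) $n c_* \|v\|_2^2 \leq \|B v\|_2^2 \leq n c^* \|v\|_2^2$ for all $v \in \mathbb{R}^{m_2}$, and (iii) $\|A^\top B v\|_2 \leq n\omega \|v\|_2$ for all $v$ and $\|B^\top A u\|_2 \leq n\omega\|u\|_2$ for all $u$. Let $H_B = B(B^\top B)^{-1}B^\top$ be the orthogonal projection onto the column space of $B$. Then for all $u \in \mathbb{R}^{m_1}$: $n(c_* - \omega^2/c_*)\|u\|_2 \leq \|A^\top(I_n - H_B)A u\|_2 \leq n(c^* + \omega^2/c_*)\|u\|_2$. -/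
/-!
With `z = (BᵀB)⁻¹BᵀAu` one has `Aᵀ(I - H_B)Au = AᵀAu - AᵀBz`. The lower Riesz bound for `B` makes
`BᵀB` coercive with constant `n c_*`, so `‖z‖ ≤ ‖BᵀAu‖ / (n c_*) ≤ ω‖u‖ / c_*`. The upper bound is
then the triangle inequality, and the lower bound follows from
`u ⬝ Aᵀ(I - H_B)Au = ‖Au‖² - (BᵀAu) ⬝ z` and Cauchy–Schwarz.
-/

open Matrix

noncomputable def enorm3 {m : ℕ} (v : Fin m → ℝ) : ℝ := Real.sqrt (v ⬝ᵥ v)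

theorem mul_le_of_mul_sq_le_mul {a b t : ℝ} (ht : 0 ≤ t) (hb : 0 ≤ b) (h : a * t ^ 2 ≤ t * b) :
    a * t ≤ b := by
  rcases ht.eq_or_lt with rfl | ht
  · simpa using hb
  · nlinarith

section Matrix

variable {ι κ ν : Type*} [Fintype ι] [Fintype κ] [Fintype ν]

theorem dotProduct_transpose_mul_mulVec (P : Matrix ι κ ℝ) (Q : Matrix ι ν ℝ) (x : κ → ℝ)
    (y : ν → ℝ) : x ⬝ᵥ ((Pᵀ * Q) *ᵥ y) = (P *ᵥ x) ⬝ᵥ (Q *ᵥ y) := by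
  rw [← mulVec_mulVec, dotProduct_mulVec, vecMul_transpose]

theorem transpose_mul_one_sub_mul_mulVec [DecidableEq ι] (A : Matrix ι κ ℝ)
    (B : Matrix ι ν ℝ) (C : Matrix ν ν ℝ) (u : κ → ℝ) :
    (Aᵀ * (1 - B * C * Bᵀ) * A) *ᵥ u = (Aᵀ * A) *ᵥ u - (Aᵀ * B) *ᵥ (C *ᵥ ((Bᵀ * A) *ᵥ u)) := by
  simp only [Matrix.mul_sub, Matrix.sub_mul, Matrix.mul_one, sub_mulVec, Matrix.mul_assoc,
    ← mulVec_mulVec]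

end Matrix

namespace enorm3

variable {m k : ℕ}

theorem eq_norm_toLp (v : Fin m → ℝ) : enorm3 v = ‖WithLp.toLp 2 v‖ := by
  rw [norm_eq_sqrt_real_inner, EuclideanSpace.inner_toLp_toLp, star_trivial]
  rfl

theorem nonneg (v : Fin m → ℝ) : 0 ≤ enorm3 v := Real.sqrt_nonneg _

theorem sq_eq (v : Fin m → ℝ) : enorm3 v ^ 2 = v ⬝ᵥ v :=
  Real.sq_sqrt (dotProduct_star_self_nonneg v)

theorem eq_zero_iff {v : Fin m → ℝ} : enorm3 v = 0 ↔ v = 0 := by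
  rw [eq_norm_toLp, norm_eq_zero, WithLp.toLp_eq_zero]

theorem sub_le (v w : Fin m → ℝ) : enorm3 (v - w) ≤ enorm3 v + enorm3 w := by
  simpa only [eq_norm_toLp, WithLp.toLp_sub] using norm_sub_le _ _

theorem dotProduct_le_mul (v w : Fin m → ℝ) : v ⬝ᵥ w ≤ enorm3 v * enorm3 w := by
  simpa only [eq_norm_toLp, EuclideanSpace.inner_toLp_toLp, star_trivial, dotProduct_comm w]
    using real_inner_le_norm (WithLp.toLp 2 v) (WithLp.toLp 2 w)

theorem mulVec_le_sqrt_mul (A : Matrix (Fin k) (Fin m) ℝ) {c : ℝ}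
    (hA : ∀ x, (A *ᵥ x) ⬝ᵥ (A *ᵥ x) ≤ c * (x ⬝ᵥ x)) (x : Fin m → ℝ) :
    enorm3 (A *ᵥ x) ≤ Real.sqrt c * enorm3 x := by
  rw [enorm3, enorm3, ← Real.sqrt_mul' c (by simpa using dotProduct_star_self_nonneg x)]
  exact Real.sqrt_le_sqrt (hA x)

theorem transpose_mul_self_mulVec_le (A : Matrix (Fin k) (Fin m) ℝ) {c : ℝ} (hc : 0 ≤ c)
    (hA : ∀ x, (A *ᵥ x) ⬝ᵥ (A *ᵥ x) ≤ c * (x ⬝ᵥ x)) (x : Fin m → ℝ) :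
    enorm3 ((Aᵀ * A) *ᵥ x) ≤ c * enorm3 x := by
  set w := (Aᵀ * A) *ᵥ x
  refine (one_mul (enorm3 w)).symm.le.trans
    (mul_le_of_mul_sq_le_mul (nonneg w) (mul_nonneg hc (nonneg x)) ?_)
  calc 1 * enorm3 w ^ 2 = (A *ᵥ w) ⬝ᵥ (A *ᵥ x) := by
        rw [one_mul, sq_eq]
        exact dotProduct_transpose_mul_mulVec A A w x
    _ ≤ (Real.sqrt c * enorm3 w) * (Real.sqrt c * enorm3 x) :=
        (dotProduct_le_mul _ _).trans (mul_le_mul (mulVec_le_sqrt_mul A hA w)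
          (mulVec_le_sqrt_mul A hA x) (nonneg _) (mul_nonneg (Real.sqrt_nonneg c) (nonneg w)))
    _ = enorm3 w * (c * enorm3 x) := by
        rw [mul_mul_mul_comm, Real.mul_self_sqrt hc]; ring

end enorm3

section Coercive

variable {m : ℕ} {G : Matrix (Fin m) (Fin m) ℝ} {c : ℝ}

theorem mul_enorm3_le_enorm3_mulVec (hG : ∀ x, c * (x ⬝ᵥ x) ≤ x ⬝ᵥ (G *ᵥ x)) (x : Fin m → ℝ) :
    c * enorm3 x ≤ enorm3 (G *ᵥ x) := by
  refine mul_le_of_mul_sq_le_mul (enorm3.nonneg x) (enorm3.nonneg _) ?_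
  rw [enorm3.sq_eq]
  exact (hG x).trans (enorm3.dotProduct_le_mul _ _)

theorem isUnit_of_coercive (hG : ∀ x, c * (x ⬝ᵥ x) ≤ x ⬝ᵥ (G *ᵥ x)) (hc : 0 < c) : IsUnit G := by
  refine mulVec_injective_iff_isUnit.mp fun x y hxy => ?_
  rw [← sub_eq_zero, ← enorm3.eq_zero_iff]
  have := mul_enorm3_le_enorm3_mulVec hG (x - y)
  rw [mulVec_sub, hxy, sub_self, enorm3.eq_zero_iff.mpr rfl] at this
  exact le_antisymm (nonpos_of_mul_nonpos_right this hc) (enorm3.nonneg _)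

theorem enorm3_inv_mulVec_le (hG : ∀ x, c * (x ⬝ᵥ x) ≤ x ⬝ᵥ (G *ᵥ x)) (hc : 0 < c)
    (y : Fin m → ℝ) : enorm3 (G⁻¹ *ᵥ y) ≤ enorm3 y / c := by
  have hGinv : G * G⁻¹ = 1 :=
    mul_nonsing_inv G ((isUnit_iff_isUnit_det G).mp (isUnit_of_coercive hG hc))
  rw [le_div_iff₀' hc]
  simpa only [mulVec_mulVec, hGinv, one_mulVec] using mul_enorm3_le_enorm3_mulVec hG (G⁻¹ *ᵥ y)

end Coercive

/-- Lemma 4 (first part): two-sided spectral bounds for `Aᵀ(I - H_B)A`. -/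
theorem hat_matrix_spectrum_bounds {n m1 m2 : ℕ}
    (A : Matrix (Fin n) (Fin m1) ℝ) (B : Matrix (Fin n) (Fin m2) ℝ)
    (cs cS ω : ℝ) (hcs : 0 < cs) (hle : cs ≤ cS) (hω : 0 ≤ ω)
    (hA : ∀ u : Fin m1 → ℝ,
      (n : ℝ) * cs * (u ⬝ᵥ u) ≤ (A *ᵥ u) ⬝ᵥ (A *ᵥ u) ∧
      (A *ᵥ u) ⬝ᵥ (A *ᵥ u) ≤ (n : ℝ) * cS * (u ⬝ᵥ u))
    (hB : ∀ v : Fin m2 → ℝ,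
      (n : ℝ) * cs * (v ⬝ᵥ v) ≤ (B *ᵥ v) ⬝ᵥ (B *ᵥ v) ∧
      (B *ᵥ v) ⬝ᵥ (B *ᵥ v) ≤ (n : ℝ) * cS * (v ⬝ᵥ v))
    (hAB : ∀ v : Fin m2 → ℝ, enorm3 ((Aᵀ * B) *ᵥ v) ≤ (n : ℝ) * ω * enorm3 v)
    (hBA : ∀ u : Fin m1 → ℝ, enorm3 ((Bᵀ * A) *ᵥ u) ≤ (n : ℝ) * ω * enorm3 u)
    (HB : Matrix (Fin n) (Fin n) ℝ) (hHB : HB = B * (Bᵀ * B)⁻¹ * Bᵀ) :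
    ∀ u : Fin m1 → ℝ,
      (n : ℝ) * (cs - ω ^ 2 / cs) * enorm3 u ≤ enorm3 ((Aᵀ * (1 - HB) * A) *ᵥ u) ∧
      enorm3 ((Aᵀ * (1 - HB) * A) *ᵥ u) ≤ (n : ℝ) * (cS + ω ^ 2 / cs) * enorm3 u := by
  intro u
  rcases Nat.eq_zero_or_pos n with rfl | hn_pos
  · -- `BᵀB` has no inverse here, but every product through `Fin 0` vanishes
    simp [enorm3]
  have hn : (0 : ℝ) < n := Nat.cast_pos.mpr hn_pos
  set y := (Bᵀ * A) *ᵥ u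
  set z := (Bᵀ * B)⁻¹ *ᵥ y
  have hMu : (Aᵀ * (1 - HB) * A) *ᵥ u = (Aᵀ * A) *ᵥ u - (Aᵀ * B) *ᵥ z :=
    hHB ▸ transpose_mul_one_sub_mul_mulVec A B _ u
  have hz : enorm3 z ≤ ω * enorm3 u / cs := by
    have hBcoercive : ∀ x, n * cs * (x ⬝ᵥ x) ≤ x ⬝ᵥ ((Bᵀ * B) *ᵥ x) := fun x =>
      (dotProduct_transpose_mul_mulVec B B x x).symm ▸ (hB x).1
    calc enorm3 z ≤ enorm3 y / (n * cs) := enorm3_inv_mulVec_le hBcoercive (by positivity) y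
      _ ≤ n * ω * enorm3 u / (n * cs) := by gcongr; exact hBA u
      _ = ω * enorm3 u / cs := by field_simp
  constructor
  · have hyz : y ⬝ᵥ z ≤ n * (ω ^ 2 / cs) * enorm3 u ^ 2 :=
      calc y ⬝ᵥ z ≤ enorm3 y * enorm3 z := enorm3.dotProduct_le_mul y z
        _ ≤ (n * ω * enorm3 u) * (ω * enorm3 u / cs) :=
          mul_le_mul (hBA u) hz (enorm3.nonneg z) (by have := enorm3.nonneg u; positivity)
        _ = n * (ω ^ 2 / cs) * enorm3 u ^ 2 := by field_simp
    have hquad : n * (cs - ω ^ 2 / cs) * enorm3 u ^ 2 ≤ u ⬝ᵥ ((Aᵀ * (1 - HB) * A) *ᵥ u) := by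
      have hcross : (A *ᵥ u) ⬝ᵥ (B *ᵥ z) = y ⬝ᵥ z := by
        rw [dotProduct_comm, ← dotProduct_transpose_mul_mulVec, dotProduct_comm]
      rw [hMu, dotProduct_sub, dotProduct_transpose_mul_mulVec A A,
        dotProduct_transpose_mul_mulVec A B, hcross]
      have hAu := (hA u).1
      rw [← enorm3.sq_eq] at hAu
      linarith
    exact mul_le_of_mul_sq_le_mul (enorm3.nonneg u) (enorm3.nonneg _)
      (hquad.trans (enorm3.dotProduct_le_mul _ _))
  · calc enorm3 ((Aᵀ * (1 - HB) * A) *ᵥ u)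
        ≤ enorm3 ((Aᵀ * A) *ᵥ u) + enorm3 ((Aᵀ * B) *ᵥ z) := hMu ▸ enorm3.sub_le _ _
      _ ≤ n * cS * enorm3 u + n * ω * (ω * enorm3 u / cs) := by
        gcongr
        · exact enorm3.transpose_mul_self_mulVec_le A (mul_nonneg hn.le (hcs.le.trans hle))
            (fun x => (hA x).2) u
        · exact (hAB z).trans (by gcongr)
      _ = n * (cS + ω ^ 2 / cs) * enorm3 u := by ring
end

section
/- Under the assumptions of the previous statement (spectrum bounds $c_*, c^*$ for $A$ and $B$, cross bound $\omega$, with $c_* - \omega^2/c_* > 0$), the matrix $M = A^\top(I_n - H_B)A$ is invertible, and for all $u \in \mathbb{R}^{m_1}$: $\frac{\|u\|_2}{n(c^* + \omega^2/c_*)} \leq \|M^{-1} u\|_2 \leq \frac{\|u\|_2}{n(c_* - \omega^2/c_*)}$. -/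
/-!
Write `G = (BᵀB)⁻¹` and `y = BᵀA u`, so that `uᵀ M u = ‖A u‖² - yᵀ G y`. The lower bound on `B`
makes `BᵀB` coercive, whence `‖G y‖ ≤ ‖y‖ / (n c_*)` and `yᵀ G y ≤ ‖y‖² / (n c_*) ≤ n ω² / c_* ‖u‖²`.
Thus `uᵀ M u ≥ n (c_* - ω²/c_*) ‖u‖²`: `M` is coercive, hence invertible with
`‖M⁻¹‖ ≤ 1 / (n (c_* - ω²/c_*))`. Conversely the triangle inequality in `M u = AᵀA u - AᵀB G y`
gives `‖M‖ ≤ n (c^* + ω²/c_*)`, which bounds `‖M⁻¹ u‖` from below.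
-/

open Matrix

noncomputable def enorm4 {m : ℕ} (v : Fin m → ℝ) : ℝ := Real.sqrt (v ⬝ᵥ v)

section EuclideanNorm

variable {m : ℕ}

lemma inner_toLp_eq_dotProduct (u v : Fin m → ℝ) :
    inner ℝ (WithLp.toLp 2 u) (WithLp.toLp 2 v) = u ⬝ᵥ v := by
  rw [EuclideanSpace.inner_toLp_toLp, star_trivial, dotProduct_comm]

lemma enorm4_eq_norm (v : Fin m → ℝ) : enorm4 v = ‖WithLp.toLp 2 v‖ := by
  rw [enorm4, ← inner_toLp_eq_dotProduct, real_inner_self_eq_norm_sq,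
    Real.sqrt_sq (norm_nonneg _)]

lemma enorm4_nonneg (v : Fin m → ℝ) : 0 ≤ enorm4 v := Real.sqrt_nonneg _

lemma enorm4_sq (v : Fin m → ℝ) : enorm4 v ^ 2 = v ⬝ᵥ v := by
  rw [enorm4_eq_norm, ← real_inner_self_eq_norm_sq, inner_toLp_eq_dotProduct]

lemma enorm4_eq_zero {v : Fin m → ℝ} : enorm4 v = 0 ↔ v = 0 := by
  rw [enorm4_eq_norm, norm_eq_zero, WithLp.toLp_eq_zero]

lemma dotProduct_le_enorm4_mul_enorm4 (u v : Fin m → ℝ) : u ⬝ᵥ v ≤ enorm4 u * enorm4 v := by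
  rw [enorm4_eq_norm, enorm4_eq_norm, ← inner_toLp_eq_dotProduct]
  exact real_inner_le_norm _ _

lemma enorm4_sub_le (u v : Fin m → ℝ) : enorm4 (u - v) ≤ enorm4 u + enorm4 v := by
  simpa only [enorm4_eq_norm, WithLp.toLp_sub] using norm_sub_le _ _

end EuclideanNorm

section MatrixIdentities

variable {R k l m : Type*} [CommRing R] [Fintype k] [Fintype l] [Fintype m]

lemma mulVec_nonsing_inv_mulVec [DecidableEq m] {S : Matrix m m R} (hS : IsUnit S)
    (v : m → R) : S *ᵥ (S⁻¹ *ᵥ v) = v := by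
  rw [mulVec_mulVec, mul_nonsing_inv _ ((isUnit_iff_isUnit_det S).mp hS), one_mulVec]

lemma dotProduct_transpose_mul_self_mulVec (C : Matrix k m R) (v : m → R) :
    v ⬝ᵥ ((Cᵀ * C) *ᵥ v) = (C *ᵥ v) ⬝ᵥ (C *ᵥ v) := by
  rw [← mulVec_mulVec, dotProduct_mulVec, vecMul_transpose]

/- With `G = (Bᵀ B)⁻¹`, the matrix `Aᵀ (1 - B G Bᵀ) A` is the Schur complement of `Bᵀ B` in the
Gram matrix of the block matrix `[A B]`. -/
lemma schur_mulVec [DecidableEq k] (A : Matrix k l R) (B : Matrix k m R) (G : Matrix m m R)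
    (u : l → R) :
    (Aᵀ * (1 - B * G * Bᵀ) * A) *ᵥ u = (Aᵀ * A) *ᵥ u - (Aᵀ * B) *ᵥ (G *ᵥ ((Bᵀ * A) *ᵥ u)) := by
  simp only [Matrix.mul_sub, Matrix.mul_one, Matrix.sub_mul, sub_mulVec, mulVec_mulVec,
    Matrix.mul_assoc]

lemma dotProduct_schur_mulVec [DecidableEq k] (A : Matrix k l R) (B : Matrix k m R)
    (G : Matrix m m R) (u : l → R) :
    u ⬝ᵥ ((Aᵀ * (1 - B * G * Bᵀ) * A) *ᵥ u) =
      (A *ᵥ u) ⬝ᵥ (A *ᵥ u) - ((Bᵀ * A) *ᵥ u) ⬝ᵥ (G *ᵥ ((Bᵀ * A) *ᵥ u)) := by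
  rw [schur_mulVec, dotProduct_sub, dotProduct_transpose_mul_self_mulVec,
    dotProduct_mulVec u (Aᵀ * B), ← mulVec_transpose, transpose_mul, transpose_transpose]

end MatrixIdentities

section OperatorBounds

variable {k m : ℕ}

lemma enorm4_mulVec_le_of_dotProduct_le {C : Matrix (Fin k) (Fin m) ℝ} {c : ℝ}
    (h : ∀ u, (C *ᵥ u) ⬝ᵥ (C *ᵥ u) ≤ c * (u ⬝ᵥ u)) (u : Fin m → ℝ) :
    enorm4 (C *ᵥ u) ≤ √c * enorm4 u := by
  rw [enorm4, enorm4, ← Real.sqrt_mul' _ (enorm4_sq u ▸ sq_nonneg _)]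
  exact Real.sqrt_le_sqrt (h u)

lemma enorm4_transpose_mulVec_le {C : Matrix (Fin k) (Fin m) ℝ} {c : ℝ} (hc : 0 ≤ c)
    (h : ∀ u, enorm4 (C *ᵥ u) ≤ c * enorm4 u) (x : Fin k → ℝ) :
    enorm4 (Cᵀ *ᵥ x) ≤ c * enorm4 x := by
  set w := Cᵀ *ᵥ x
  rcases (enorm4_nonneg w).eq_or_lt with hw | hw
  · rw [← hw]; exact mul_nonneg hc (enorm4_nonneg x)
  refine le_of_mul_le_mul_left ?_ hw
  calc enorm4 w * enorm4 w = x ⬝ᵥ (C *ᵥ w) := by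
        rw [← sq, enorm4_sq, dotProduct_mulVec, vecMul_transpose, dotProduct_comm]
    _ ≤ enorm4 x * enorm4 (C *ᵥ w) := dotProduct_le_enorm4_mul_enorm4 _ _
    _ ≤ enorm4 x * (c * enorm4 w) := mul_le_mul_of_nonneg_left (h w) (enorm4_nonneg x)
    _ = enorm4 w * (c * enorm4 x) := by ring

lemma enorm4_transpose_mul_self_mulVec_le {C : Matrix (Fin k) (Fin m) ℝ} {c : ℝ} (hc : 0 ≤ c)
    (h : ∀ u, (C *ᵥ u) ⬝ᵥ (C *ᵥ u) ≤ c * (u ⬝ᵥ u)) (u : Fin m → ℝ) :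
    enorm4 ((Cᵀ * C) *ᵥ u) ≤ c * enorm4 u := by
  have hC := enorm4_mulVec_le_of_dotProduct_le h
  calc enorm4 ((Cᵀ * C) *ᵥ u) = enorm4 (Cᵀ *ᵥ (C *ᵥ u)) := by rw [mulVec_mulVec]
    _ ≤ √c * (√c * enorm4 u) :=
        (enorm4_transpose_mulVec_le (Real.sqrt_nonneg c) hC _).trans (by gcongr; exact hC u)
    _ = c * enorm4 u := by rw [← mul_assoc, Real.mul_self_sqrt hc]

variable {S : Matrix (Fin m) (Fin m) ℝ}

lemma mul_enorm4_le_enorm4_mulVec {α : ℝ} (h : ∀ u, α * (u ⬝ᵥ u) ≤ u ⬝ᵥ (S *ᵥ u))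
    (u : Fin m → ℝ) : α * enorm4 u ≤ enorm4 (S *ᵥ u) := by
  rcases (enorm4_nonneg u).eq_or_lt with hu | hu
  · rw [← hu, mul_zero]; exact enorm4_nonneg _
  refine le_of_mul_le_mul_left ?_ hu
  calc enorm4 u * (α * enorm4 u) = α * (u ⬝ᵥ u) := by rw [← enorm4_sq]; ring
    _ ≤ u ⬝ᵥ (S *ᵥ u) := h u
    _ ≤ enorm4 u * enorm4 (S *ᵥ u) := dotProduct_le_enorm4_mul_enorm4 _ _

lemma isUnit_of_mul_enorm4_le_enorm4_mulVec {α : ℝ} (hα : 0 < α)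
    (h : ∀ u, α * enorm4 u ≤ enorm4 (S *ᵥ u)) : IsUnit S := by
  refine mulVec_injective_iff_isUnit.mp fun u v huv => sub_eq_zero.mp (enorm4_eq_zero.mp ?_)
  have := h (u - v)
  rw [mulVec_sub, huv, sub_self, enorm4_eq_zero.mpr rfl] at this
  exact le_antisymm (nonpos_of_mul_nonpos_right this hα) (enorm4_nonneg _)

lemma enorm4_nonsing_inv_mulVec_le {α : ℝ} (hα : 0 < α)
    (h : ∀ u, α * enorm4 u ≤ enorm4 (S *ᵥ u)) (v : Fin m → ℝ) :
    enorm4 (S⁻¹ *ᵥ v) ≤ enorm4 v / α := by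
  rw [le_div_iff₀ hα, mul_comm]
  simpa only [mulVec_nonsing_inv_mulVec (isUnit_of_mul_enorm4_le_enorm4_mulVec hα h)]
    using h (S⁻¹ *ᵥ v)

lemma div_le_enorm4_nonsing_inv_mulVec (hS : IsUnit S) {β : ℝ} (hβ : 0 < β)
    (h : ∀ u, enorm4 (S *ᵥ u) ≤ β * enorm4 u) (v : Fin m → ℝ) :
    enorm4 v / β ≤ enorm4 (S⁻¹ *ᵥ v) := by
  rw [div_le_iff₀ hβ, mul_comm]
  simpa only [mulVec_nonsing_inv_mulVec hS] using h (S⁻¹ *ᵥ v)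

end OperatorBounds

section SchurComplementBounds

variable {k l m : ℕ} (A : Matrix (Fin k) (Fin l) ℝ) (B : Matrix (Fin k) (Fin m) ℝ)
  {G : Matrix (Fin m) (Fin m) ℝ} {b g : ℝ}

lemma le_dotProduct_schur_mulVec {a : ℝ} (hg : 0 < g)
    (hA : ∀ u, a * (u ⬝ᵥ u) ≤ (A *ᵥ u) ⬝ᵥ (A *ᵥ u))
    (hG : ∀ y, enorm4 (G *ᵥ y) ≤ enorm4 y / g)
    (hBA : ∀ u, enorm4 ((Bᵀ * A) *ᵥ u) ≤ b * enorm4 u) (u : Fin l → ℝ) :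
    (a - b ^ 2 / g) * (u ⬝ᵥ u) ≤ u ⬝ᵥ ((Aᵀ * (1 - B * G * Bᵀ) * A) *ᵥ u) := by
  set y := (Bᵀ * A) *ᵥ u
  have hy : y ⬝ᵥ (G *ᵥ y) ≤ b ^ 2 / g * (u ⬝ᵥ u) := calc
    y ⬝ᵥ (G *ᵥ y) ≤ enorm4 y * enorm4 (G *ᵥ y) := dotProduct_le_enorm4_mul_enorm4 _ _
    _ ≤ enorm4 y * (enorm4 y / g) := mul_le_mul_of_nonneg_left (hG y) (enorm4_nonneg y)
    _ = enorm4 y ^ 2 / g := by ring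
    _ ≤ (b * enorm4 u) ^ 2 / g := by gcongr; exacts [enorm4_nonneg y, hBA u]
    _ = b ^ 2 / g * (u ⬝ᵥ u) := by rw [mul_pow, enorm4_sq]; ring
  rw [dotProduct_schur_mulVec]
  linarith [hA u]

lemma enorm4_schur_mulVec_le {c : ℝ} (hg : 0 < g) (hb : 0 ≤ b) (hc : 0 ≤ c)
    (hA : ∀ u, (A *ᵥ u) ⬝ᵥ (A *ᵥ u) ≤ c * (u ⬝ᵥ u))
    (hG : ∀ y, enorm4 (G *ᵥ y) ≤ enorm4 y / g)
    (hAB : ∀ v, enorm4 ((Aᵀ * B) *ᵥ v) ≤ b * enorm4 v)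
    (hBA : ∀ u, enorm4 ((Bᵀ * A) *ᵥ u) ≤ b * enorm4 u) (u : Fin l → ℝ) :
    enorm4 ((Aᵀ * (1 - B * G * Bᵀ) * A) *ᵥ u) ≤ (c + b ^ 2 / g) * enorm4 u := by
  have hcross : enorm4 ((Aᵀ * B) *ᵥ (G *ᵥ ((Bᵀ * A) *ᵥ u))) ≤ b ^ 2 / g * enorm4 u := calc
    _ ≤ b * enorm4 (G *ᵥ ((Bᵀ * A) *ᵥ u)) := hAB _
    _ ≤ b * (b * enorm4 u / g) := by gcongr; exact (hG _).trans (by gcongr; exact hBA u)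
    _ = b ^ 2 / g * enorm4 u := by ring
  rw [schur_mulVec]
  calc _ ≤ _ := enorm4_sub_le _ _
    _ ≤ c * enorm4 u + b ^ 2 / g * enorm4 u :=
        add_le_add (enorm4_transpose_mul_self_mulVec_le hc hA u) hcross
    _ = (c + b ^ 2 / g) * enorm4 u := by ring

end SchurComplementBounds

/-- Lemma 4 (second part): `M = Aᵀ(I - H_B)A` is invertible and `M⁻¹` satisfies
the reciprocal spectral bounds. -/
theorem hat_matrix_inverse_spectrum_bounds {n m1 m2 : ℕ} (hn : 0 < n)
    (A : Matrix (Fin n) (Fin m1) ℝ) (B : Matrix (Fin n) (Fin m2) ℝ)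
    (cs cS ω : ℝ) (hcs : 0 < cs) (hle : cs ≤ cS) (hω : 0 ≤ ω)
    (hgap : 0 < cs - ω ^ 2 / cs)
    (hA : ∀ u : Fin m1 → ℝ,
      (n : ℝ) * cs * (u ⬝ᵥ u) ≤ (A *ᵥ u) ⬝ᵥ (A *ᵥ u) ∧
      (A *ᵥ u) ⬝ᵥ (A *ᵥ u) ≤ (n : ℝ) * cS * (u ⬝ᵥ u))
    (hB : ∀ v : Fin m2 → ℝ,
      (n : ℝ) * cs * (v ⬝ᵥ v) ≤ (B *ᵥ v) ⬝ᵥ (B *ᵥ v) ∧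
      (B *ᵥ v) ⬝ᵥ (B *ᵥ v) ≤ (n : ℝ) * cS * (v ⬝ᵥ v))
    (hAB : ∀ v : Fin m2 → ℝ, enorm4 ((Aᵀ * B) *ᵥ v) ≤ (n : ℝ) * ω * enorm4 v)
    (hBA : ∀ u : Fin m1 → ℝ, enorm4 ((Bᵀ * A) *ᵥ u) ≤ (n : ℝ) * ω * enorm4 u)
    (HB : Matrix (Fin n) (Fin n) ℝ) (hHB : HB = B * (Bᵀ * B)⁻¹ * Bᵀ)
    (M : Matrix (Fin m1) (Fin m1) ℝ) (hM : M = Aᵀ * (1 - HB) * A) :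
    IsUnit M ∧
    ∀ u : Fin m1 → ℝ,
      enorm4 u / ((n : ℝ) * (cS + ω ^ 2 / cs)) ≤ enorm4 (M⁻¹ *ᵥ u) ∧
      enorm4 (M⁻¹ *ᵥ u) ≤ enorm4 u / ((n : ℝ) * (cs - ω ^ 2 / cs)) := by
  subst hM hHB
  have hn' : (0 : ℝ) < n := Nat.cast_pos.mpr hn
  have hcS : 0 < cS := hcs.trans_le hle
  have hg : 0 < (n : ℝ) * cs := mul_pos hn' hcs
  have hG : ∀ y, enorm4 ((Bᵀ * B)⁻¹ *ᵥ y) ≤ enorm4 y / (n * cs) :=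
    enorm4_nonsing_inv_mulVec_le hg <| mul_enorm4_le_enorm4_mulVec fun v => by
      rw [dotProduct_transpose_mul_self_mulVec]; exact (hB v).1
  have hlower := le_dotProduct_schur_mulVec A B hg (fun u => (hA u).1) hG hBA
  have hupper := enorm4_schur_mulVec_le A B hg (by positivity) (by positivity)
    (fun u => (hA u).2) hG hAB hBA
  rw [show (n : ℝ) * cs - (n * ω) ^ 2 / (n * cs) = n * (cs - ω ^ 2 / cs) by
    field_simp] at hlower
  rw [show (n : ℝ) * cS + (n * ω) ^ 2 / (n * cs) = n * (cS + ω ^ 2 / cs) by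
    field_simp] at hupper
  have hcoercive := mul_enorm4_le_enorm4_mulVec hlower
  have hunit := isUnit_of_mul_enorm4_le_enorm4_mulVec (mul_pos hn' hgap) hcoercive
  exact ⟨hunit, fun u => ⟨div_le_enorm4_nonsing_inv_mulVec hunit (by positivity) hupper u,
    enorm4_nonsing_inv_mulVec_le (mul_pos hn' hgap) hcoercive u⟩⟩
end
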